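/- arXiv:2202.08530 — 7 statements merged into one kernel-verified Lean document; each statement's English description precedes it below -/
import Mathlib

section
/- Let n be sufficiently large and let H = (V, E) be a graph on at most n vertices with minimum degree δ(H) ≥ n/6. Let t ≤ n/√(ln n), and let A_1, …, A_t ⊆ V be subsets with |A_j| ≤ n·e^{-√(ln n)/3} for all 1 ≤ j ≤ t. Then there exists a set B ⊆ V with |B| ≤ 3.1·√(ln n) such that: (i) B dominates all but at most n·e^{-√(ln n)/3} vertices of V; (ii) B \ A_j ≠ ∅ for every j = 1, …, t; and (iii) the subgraph of H induced by B has at most six connected components. -/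
/-!
Sample `k ≈ 3√(ln n)` vertices independently and uniformly at random. A fixed vertex has at
most `5n/6` non-neighbours, so the sample misses it with probability `(5/6)^k ≪ e^{-√(ln n)/3}`,
and the sample lies inside a fixed `A_j` with probability at most `(6e^{-√(ln n)/3})^k ≪ 1/t`.
A first-moment count therefore yields a sample that dominates all but `n e^{-√(ln n)/3}`
vertices and leaves every `A_j`. The sample induces at most `k` components. Since every
vertex has degree at least `|V|/6`, some vertex is adjacent to at least a sixth of any
family of components, so adding it shrinks `c` components to at most `5c/6 + 1`; after
`√(ln n)/20` such additions at most six components remain.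
-/

open Finset Real

theorem Finset.sum_card_filter_forall_mem_eq_sum_card_pow {α ι : Type*} [Fintype α]
    [DecidableEq α] [Fintype ι] (S : ι → Finset α) (k : ℕ) :
    ∑ ω : Fin k → α, #{j | ∀ i, ω i ∈ S j} = ∑ j, #(S j) ^ k := by
  simp_rw [card_filter]
  rw [sum_comm]
  refine sum_congr rfl fun j _ => ?_
  rw [← card_filter, ← Fintype.card_piFinset_const]
  congr 1
  ext ω
  simp

theorem Finset.sum_card_filter_forall_mem_le {α ι : Type*} [Fintype α] [DecidableEq α]
    [Fintype ι] (S : ι → Finset α) (k : ℕ) {β : ℝ} (hS : ∀ j, (#(S j) : ℝ) ≤ β) :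
    ∑ ω : Fin k → α, (#{j | ∀ i, ω i ∈ S j} : ℝ) ≤ Fintype.card ι * β ^ k := by
  rw [← Nat.cast_sum, sum_card_filter_forall_mem_eq_sum_card_pow, Nat.cast_sum]
  calc ∑ j, ((#(S j) ^ k : ℕ) : ℝ) ≤ ∑ _j : ι, β ^ k := by
        push_cast; gcongr with j; exact hS j
    _ = Fintype.card ι * β ^ k := by simp

theorem Fintype.exists_lt_and_eq_zero_of_sum_add_mul_sum_lt {Ω : Type*} [Fintype Ω]
    (f g : Ω → ℕ) {M : ℝ} (hM : 0 < M)
    (h : ∑ ω, (f ω : ℝ) + M * ∑ ω, (g ω : ℝ) < M * Fintype.card Ω) :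
    ∃ ω, f ω < M ∧ g ω = 0 := by
  rw [mul_sum, ← sum_add_distrib, ← nsmul_eq_mul', ← card_univ, ← sum_const] at h
  obtain ⟨ω, -, hω⟩ := exists_lt_of_sum_lt h
  have hg : g ω = 0 := by
    by_contra hg
    have : (1 : ℝ) ≤ g ω := by exact_mod_cast Nat.one_le_iff_ne_zero.2 hg
    nlinarith [(f ω).cast_nonneg (α := ℝ)]
  exact ⟨ω, by simpa [hg] using hω, hg⟩

namespace SimpleGraph

variable {V : Type*} (H : SimpleGraph V)

theorem card_filter_not_adj_add_minDegree_le [Fintype V] [DecidableRel H.Adj] (v : V) :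
    #{u | ¬ H.Adj v u} + H.minDegree ≤ Fintype.card V := by
  have := card_filter_add_card_filter_not (s := univ) (H.Adj v)
  rw [← H.neighborFinset_eq_filter, H.card_neighborFinset_eq_degree, card_univ] at this
  have := H.minDegree_le_degree v
  omega

theorem card_connectedComponent_induce_le (B : Finset V) :
    Nat.card (H.induce (B : Set V)).ConnectedComponent ≤ #B :=
  (Nat.card_le_card_of_surjective _ Quot.mk_surjective).trans (by simp)

theorem exists_finset_card_le_undominated_lt_and_diff_nonempty [Fintype V] [Nonempty V]
    [DecidableEq V] [DecidableRel H.Adj] {ι : Type*} [Fintype ι] (A : ι → Set V) (k : ℕ)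
    {θ α M : ℝ}
    (hθ : ∀ v, (#{u | ¬ H.Adj v u} : ℝ) ≤ θ * Fintype.card V)
    (hα : ∀ j, ((A j).ncard : ℝ) ≤ α * Fintype.card V) (hM : 0 < M)
    (h : Fintype.card V * θ ^ k + M * Fintype.card ι * α ^ k < M) :
    ∃ B : Finset V, #B ≤ k ∧ ({v | ∀ b ∈ B, ¬ H.Adj v b}.ncard : ℝ) < M ∧
      ∀ j, ((B : Set V) \ A j).Nonempty := by
  classical
  set N := Fintype.card V
  -- `ω` ranges over the samples of `k` vertices with repetition: the two sums below are `N ^ k`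
  -- times the expected numbers of undominated vertices and of sets `A j` containing the sample.
  have hundom := sum_card_filter_forall_mem_le (fun v => {u | ¬ H.Adj v u}) k hθ
  have hcovered := sum_card_filter_forall_mem_le (fun j => (A j).toFinset) k (β := α * N)
    fun j => by rw [← Set.ncard_eq_toFinset_card']; exact hα j
  simp only [mem_filter, mem_univ, true_and, Set.mem_toFinset, mul_pow] at hundom hcovered
  obtain ⟨ω, hω, hcov⟩ := Fintype.exists_lt_and_eq_zero_of_sum_add_mul_sum_lt
    (fun ω : Fin k → V => #{v | ∀ i, ¬ H.Adj v (ω i)})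
    (fun ω : Fin k → V => #{j | ∀ i, ω i ∈ A j}) hM (by
      rw [Fintype.card_pi_const]
      have hN : (0 : ℝ) < N ^ k := by positivity
      push_cast
      nlinarith)
  refine ⟨univ.image ω, card_image_le.trans (card_fin k).le, ?_, fun j => ?_⟩
  · convert hω using 3
    rw [← Set.ncard_coe_finset]
    congr 1; ext v; simp
  · obtain ⟨i, hi⟩ : ∃ i, ω i ∉ A j := by
      simpa using filter_eq_empty_iff.1 (card_eq_zero.1 hcov) (mem_univ j)
    exact ⟨ω i, by simp, hi⟩

theorem card_connectedComponent_induce_insert_add_card_le [Finite V] (B : Set V) (u : V)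
    (D : Finset (H.induce B).ConnectedComponent) (hD : ∀ K ∈ D, ∃ v ∈ K.supp, H.Adj u v) :
    Nat.card (H.induce (insert u B : Set V)).ConnectedComponent + #D ≤
      Nat.card (H.induce B).ConnectedComponent + 1 := by
  classical
  let φ := (H.induceHomOfLE (Set.subset_insert u B)).toHom
  let u' : (insert u B : Set V) := ⟨u, Set.mem_insert u B⟩
  have hmerge :
      ∀ K ∈ D, K.map φ = (H.induce (insert u B : Set V)).connectedComponentMk u' := by
    intro K hK
    obtain ⟨v, hvK, huv⟩ := hD K hK
    rw [← (ConnectedComponent.mem_supp_iff K v).mp hvK, ConnectedComponent.map_mk,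
      ConnectedComponent.eq]
    exact Adj.reachable (G := H.induce (insert u B : Set V)) huv.symm
  let g : Option {K // K ∉ D} → (H.induce (insert u B : Set V)).ConnectedComponent :=
    fun o => o.elim ((H.induce (insert u B : Set V)).connectedComponentMk u') fun K => K.1.map φ
  have hg : Function.Surjective g := by
    refine ConnectedComponent.ind fun ⟨w, hw⟩ => ?_
    rcases hw with rfl | hwB
    · exact ⟨none, rfl⟩
    set K := (H.induce B).connectedComponentMk ⟨w, hwB⟩
    by_cases hK : K ∈ D
    · exact ⟨none, (hmerge K hK).symm⟩
    · exact ⟨some ⟨K, hK⟩, ConnectedComponent.map_mk _ _⟩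
  have := Fintype.ofFinite (H.induce B).ConnectedComponent
  calc Nat.card (H.induce (insert u B : Set V)).ConnectedComponent + #D
      ≤ Nat.card (Option {K // K ∉ D}) + #D := by
        gcongr; exact Nat.card_le_card_of_surjective g hg
    _ = Nat.card (H.induce B).ConnectedComponent + 1 := by
        rw [Finite.card_option, Nat.card_eq_fintype_card, Fintype.card_subtype_compl,
          Fintype.card_coe, Nat.card_eq_fintype_card]
        have := D.card_le_univ
        omega

theorem exists_card_mul_minDegree_le_card_mul_card_adj [Fintype V] [Nonempty V] [DecidableRel H.Adj]
    {ι : Type*} [Fintype ι] (f : ι → V) :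
    ∃ u, Fintype.card ι * H.minDegree ≤ Fintype.card V * #{i | H.Adj u (f i)} := by
  classical
  have hsum : ∑ u, #{i | H.Adj u (f i)} = ∑ i, H.degree (f i) := by
    simp_rw [card_filter]
    rw [sum_comm]
    refine sum_congr rfl fun i _ => ?_
    rw [← card_filter, ← card_neighborFinset_eq_degree, neighborFinset_eq_filter]
    simp_rw [adj_comm]
  have hle : ∑ _u : V, Fintype.card ι * H.minDegree ≤
      ∑ u, Fintype.card V * #{i | H.Adj u (f i)} := by
    calc ∑ _u : V, Fintype.card ι * H.minDegree = Fintype.card V * ∑ _i : ι, H.minDegree := by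
          simp
      _ ≤ Fintype.card V * ∑ i, H.degree (f i) := by
          gcongr with i; exact H.minDegree_le_degree (f i)
      _ = _ := by rw [← hsum, mul_sum]
  obtain ⟨u, -, hu⟩ := exists_le_of_sum_le univ_nonempty hle
  exact ⟨u, hu⟩

theorem exists_mul_card_connectedComponent_induce_insert_le [Fintype V] [Nonempty V]
    [DecidableRel H.Adj] {r : ℕ} (hr : Fintype.card V ≤ r * H.minDegree) (B : Set V) :
    ∃ u, r * Nat.card (H.induce (insert u B : Set V)).ConnectedComponent +
        Nat.card (H.induce B).ConnectedComponent ≤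
      r * Nat.card (H.induce B).ConnectedComponent + r := by
  classical
  have := Fintype.ofFinite (H.induce B).ConnectedComponent
  obtain ⟨u, hu⟩ := H.exists_card_mul_minDegree_le_card_mul_card_adj
    fun K : (H.induce B).ConnectedComponent => (K.out : V)
  have hmerge := H.card_connectedComponent_induce_insert_add_card_le B u {K | H.Adj u K.out}
    fun K hK => ⟨K.out, Quot.out_eq K, (mem_filter.1 hK).2⟩
  rw [← Nat.card_eq_fintype_card] at hu
  set c := Nat.card (H.induce B).ConnectedComponent
  set d := #{K : (H.induce B).ConnectedComponent | H.Adj u K.out}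
  have hδ : 0 < H.minDegree :=
    (CanonicallyOrderedAdd.mul_pos.1 (Fintype.card_pos.trans_le hr)).2
  have hcd : c ≤ r * d :=
    le_of_mul_le_mul_right (hu.trans (by rw [mul_right_comm]; gcongr)) hδ
  refine ⟨u, ?_⟩
  calc r * Nat.card (H.induce (insert u B : Set V)).ConnectedComponent + c
      ≤ r * Nat.card (H.induce (insert u B : Set V)).ConnectedComponent + r * d := by gcongr
    _ = r * (Nat.card (H.induce (insert u B : Set V)).ConnectedComponent + d) := by ring
    _ ≤ r * c + r := by rw [← mul_add_one]; gcongr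

theorem exists_superset_pow_mul_card_connectedComponent_induce_sub_le [Fintype V] [Nonempty V]
    [DecidableEq V] [DecidableRel H.Adj] {r : ℕ} (hr : Fintype.card V ≤ r * H.minDegree)
    (m : ℕ) (B : Finset V) :
    ∃ B' ⊇ B, #B' ≤ #B + m ∧
      (r : ℝ) ^ m * (Nat.card (H.induce (B' : Set V)).ConnectedComponent - r) ≤
        (r - 1) ^ m * (Nat.card (H.induce (B : Set V)).ConnectedComponent - r) := by
  induction m generalizing B with
  | zero => exact ⟨B, subset_rfl, by simp, by simp⟩
  | succ m ih =>
    obtain ⟨u, hu⟩ := H.exists_mul_card_connectedComponent_induce_insert_le hr B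
    obtain ⟨B', hB', hcard, hc⟩ := ih (insert u B)
    refine ⟨B', (subset_insert u B).trans hB', ?_, ?_⟩
    · have := card_insert_le u B
      omega
    have hr1 : (1 : ℝ) ≤ r := by
      exact_mod_cast (CanonicallyOrderedAdd.mul_pos.1 (Fintype.card_pos.trans_le hr)).1
    rw [coe_insert] at hc
    have hu' : (r : ℝ) * (Nat.card (H.induce (insert u B : Set V)).ConnectedComponent - r) ≤
        (r - 1) * (Nat.card (H.induce (B : Set V)).ConnectedComponent - r) := by
      have := (Nat.cast_le (α := ℝ)).2 hu
      push_cast at this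
      linarith
    calc (r : ℝ) ^ (m + 1) * (Nat.card (H.induce (B' : Set V)).ConnectedComponent - r)
        = r * (r ^ m * (Nat.card (H.induce (B' : Set V)).ConnectedComponent - r)) := by ring
      _ ≤ r * ((r - 1) ^ m *
          (Nat.card (H.induce (insert u B : Set V)).ConnectedComponent - r)) := by gcongr
      _ = (r - 1) ^ m *
          (r * (Nat.card (H.induce (insert u B : Set V)).ConnectedComponent - r)) := by ring
      _ ≤ (r - 1) ^ m * ((r - 1) * (Nat.card (H.induce (B : Set V)).ConnectedComponent - r)) := by
          gcongr
      _ = _ := by ring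

theorem exists_superset_card_connectedComponent_induce_le [Fintype V] [Nonempty V]
    [DecidableEq V] [DecidableRel H.Adj] {r : ℕ} (hr : Fintype.card V ≤ r * H.minDegree)
    (B : Finset V) {m : ℕ}
    (hm : Nat.card (H.induce (B : Set V)).ConnectedComponent * ((r - 1) / r : ℝ) ^ m < 1) :
    ∃ B' ⊇ B, #B' ≤ #B + m ∧ Nat.card (H.induce (B' : Set V)).ConnectedComponent ≤ r := by
  obtain ⟨B', hB', hcard, hc⟩ :=
    H.exists_superset_pow_mul_card_connectedComponent_induce_sub_le hr m B
  refine ⟨B', hB', hcard, ?_⟩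
  have hr1 : (1 : ℝ) ≤ r := by
    exact_mod_cast (CanonicallyOrderedAdd.mul_pos.1 (Fintype.card_pos.trans_le hr)).1
  have hpow : (0 : ℝ) < r ^ m := by positivity
  rw [div_pow, mul_div_assoc', div_lt_one hpow] at hm
  have : (Nat.card (H.induce (B' : Set V)).ConnectedComponent : ℝ) - r < 1 := by
    refine lt_of_mul_lt_mul_left ?_ hpow.le
    calc (r : ℝ) ^ m * (Nat.card (H.induce (B' : Set V)).ConnectedComponent - r)
        ≤ (r - 1) ^ m * (Nat.card (H.induce (B : Set V)).ConnectedComponent - r) := hc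
      _ ≤ Nat.card (H.induce (B : Set V)).ConnectedComponent * (r - 1) ^ m := by
          have : (0 : ℝ) ≤ (r - 1) ^ m := pow_nonneg (by linarith) m
          nlinarith
      _ < r ^ m * 1 := by rwa [mul_one]
  have : Nat.card (H.induce (B' : Set V)).ConnectedComponent < r + 1 := by
    exact_mod_cast
      (by linarith : (Nat.card (H.induce (B' : Set V)).ConnectedComponent : ℝ) < r + 1)
  omega

end SimpleGraph

theorem five_sixths_pow_le_exp (k : ℕ) : (5 / 6 : ℝ) ^ k ≤ exp (-k / 6) := by
  calc (5 / 6 : ℝ) ^ k ≤ exp (-(1 / 6)) ^ k := by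
        gcongr; linarith [add_one_le_exp (-(1 / 6) : ℝ)]
    _ = exp (-k / 6) := by rw [← exp_nat_mul]; ring_nf

theorem five_sixths_pow_le_exp_neg_div_three {s : ℝ} {k : ℕ} (hs : 0 ≤ s)
    (hk : 3 * s + 20 ≤ k) : (5 / 6 : ℝ) ^ k ≤ exp (-s / 3) / 2 := by
  calc (5 / 6 : ℝ) ^ k ≤ exp (-k / 6) := five_sixths_pow_le_exp k
    _ ≤ exp (-s / 3 + -1) := by gcongr; linarith
    _ ≤ exp (-s / 3) / 2 := by
        rw [exp_add, exp_neg 1]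
        have := exp_one_gt_two
        rw [mul_inv_le_iff₀ (by positivity)]
        nlinarith [exp_pos (-s / 3)]

theorem exp_sq_mul_six_mul_exp_pow_lt {s : ℝ} {k : ℕ} (hs : 63 ≤ s) (hk : 3 * s + 20 ≤ k) :
    exp (s ^ 2) * (6 * exp (-s / 3)) ^ k < 1 / 2 := by
  have h6 : (6 : ℝ) ≤ exp 2 := by
    rw [show (2 : ℝ) = 1 + 1 by norm_num, exp_add]
    nlinarith [exp_one_gt_d9]
  calc exp (s ^ 2) * (6 * exp (-s / 3)) ^ k ≤ exp (s ^ 2) * exp (2 - s / 3) ^ k := by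
        rw [show 2 - s / 3 = 2 + -s / 3 by ring, exp_add]
        gcongr
    _ = exp (s ^ 2 + k * (2 - s / 3)) := by rw [← exp_nat_mul, ← exp_add]
    _ ≤ exp (-1) := by gcongr; nlinarith
    _ < 1 / 2 := by
        rw [exp_neg]; have := exp_one_gt_two; rw [inv_lt_comm₀ (by positivity) (by norm_num)]
        linarith

theorem natCast_mul_five_sixths_pow_lt_one {s : ℝ} {k m : ℕ} (hs : 10 ^ 5 ≤ s)
    (hk : k ≤ 3 * s + 21) (hm : s / 20 ≤ m) : k * (5 / 6 : ℝ) ^ m < 1 := by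
  have hexp : 3 * s + 21 < exp (s / 120) := by
    nlinarith [quadratic_le_exp_of_nonneg (show 0 ≤ s / 120 by positivity)]
  calc k * (5 / 6 : ℝ) ^ m ≤ (3 * s + 21) * exp (-(s / 120)) := by
        gcongr
        exact (five_sixths_pow_le_exp m).trans (by gcongr; linarith)
    _ < 1 := by
        rw [exp_neg, ← div_eq_mul_inv, div_lt_one (exp_pos _)]
        exact hexp

theorem five_sixths_pow_add_six_mul_exp_pow_lt {s n N t : ℝ} {k : ℕ} (hs : 63 ≤ s)
    (hk : 3 * s + 20 ≤ k) (hn : 0 < n) (hN : N ≤ n) (ht : t ≤ exp (s ^ 2)) :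
    N * (5 / 6) ^ k + n * exp (-s / 3) * t * (6 * exp (-s / 3)) ^ k < n * exp (-s / 3) := by
  have hmiss : N * (5 / 6) ^ k ≤ n * (exp (-s / 3) / 2) :=
    mul_le_mul hN (five_sixths_pow_le_exp_neg_div_three (by linarith) hk) (by positivity) hn.le
  have hinside : t * (6 * exp (-s / 3)) ^ k < 1 / 2 :=
    (mul_le_mul_of_nonneg_right ht (by positivity)).trans_lt (exp_sq_mul_six_mul_exp_pow_lt hs hk)
  nlinarith [mul_lt_mul_of_pos_left hinside (by positivity : 0 < n * exp (-s / 3))]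

theorem le_sqrt_log_of_exp_sq_le {a x : ℝ} (ha : 0 ≤ a) (h : exp (a ^ 2) ≤ x) :
    a ≤ √(log x) :=
  (sqrt_sq ha).symm.trans_le (sqrt_le_sqrt ((le_log_iff_exp_le ((exp_pos _).trans_le h)).2 h))

theorem exp_sqrt_log_sq {x : ℝ} (hx : 1 ≤ x) : exp (√(log x) ^ 2) = x := by
  rw [sq_sqrt (log_nonneg hx), exp_log (by linarith)]

theorem SimpleGraph.exists_finset_card_le_undominated_lt_exp_and_diff_nonempty {V : Type*}
    [Fintype V] [Nonempty V] [DecidableEq V] (H : SimpleGraph V) [DecidableRel H.Adj]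
    {n : ℕ} {s : ℝ} (hn : exp (s ^ 2) = n) (hs : 63 ≤ s) {k : ℕ} (hk : 3 * s + 20 ≤ k)
    (hcard : Fintype.card V ≤ n) (hdeg : (n : ℝ) / 6 ≤ H.minDegree)
    {ι : Type*} [Fintype ι] (hι : (Fintype.card ι : ℝ) ≤ n) (A : ι → Set V)
    (hA : ∀ j, ((A j).ncard : ℝ) ≤ n * exp (-s / 3)) :
    ∃ B : Finset V, #B ≤ k ∧
      ({v | ∀ b ∈ B, ¬ H.Adj v b}.ncard : ℝ) < n * exp (-s / 3) ∧
      ∀ j, ((B : Set V) \ A j).Nonempty := by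
  have hN : (Fintype.card V : ℝ) ≤ n := by exact_mod_cast hcard
  have hnN : (n : ℝ) ≤ 6 * Fintype.card V := by
    linarith [show (H.minDegree : ℝ) < Fintype.card V by exact_mod_cast H.minDegree_lt_card]
  have hn_pos : (0 : ℝ) < n := hn ▸ exp_pos _
  refine H.exists_finset_card_le_undominated_lt_and_diff_nonempty A k (θ := 5 / 6)
    (α := 6 * exp (-s / 3)) (fun v => ?_) (fun j => (hA j).trans ?_) (by positivity)
    (five_sixths_pow_add_six_mul_exp_pow_lt hs hk hn_pos hN (hn ▸ hι))
  · have := (Nat.cast_le (α := ℝ)).2 (H.card_filter_not_adj_add_minDegree_le v)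
    push_cast at this
    linarith
  · nlinarith [exp_pos (-s / 3)]

/-- The key lemma: in a graph `H` on at most `n` vertices with minimum degree at least
`n/6`, given at most `n/√(ln n)` sets `A_j`, each of size at most `n·e^{-√(ln n)/3}`,
there is a set `B` of at most `3.1·√(ln n)` vertices dominating all but at most
`n·e^{-√(ln n)/3}` vertices, meeting the complement of every `A_j`, and inducing a
subgraph with at most six connected components. -/
theorem dominating_set_lemma :
    ∃ n₀ : ℕ, ∀ n : ℕ, n₀ ≤ n →
      ∀ (V : Type) [Fintype V] [Nonempty V] (H : SimpleGraph V)
        [DecidableRel H.Adj],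
        Fintype.card V ≤ n →
        (n : ℝ) / 6 ≤ (H.minDegree : ℝ) →
        ∀ (t : ℕ), (t : ℝ) ≤ (n : ℝ) / Real.sqrt (Real.log n) →
        ∀ (A : Fin t → Set V),
          (∀ j, ((A j).ncard : ℝ) ≤ (n : ℝ) * Real.exp (-(Real.sqrt (Real.log n)) / 3)) →
          ∃ B : Finset V,
            ((B.card : ℝ) ≤ 3.1 * Real.sqrt (Real.log n)) ∧
            (({v : V | ∀ b ∈ B, ¬ H.Adj v b}.ncard : ℝ) ≤
              (n : ℝ) * Real.exp (-(Real.sqrt (Real.log n)) / 3)) ∧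
            (∀ j : Fin t, ((B : Set V) \ A j).Nonempty) ∧
            Nat.card (H.induce (B : Set V)).ConnectedComponent ≤ 6 := by
  refine ⟨⌈exp ((10 ^ 5) ^ 2)⌉₊, fun n hn V _ _ H _ hcard hdeg t ht A hA => ?_⟩
  classical
  replace hn : exp ((10 ^ 5) ^ 2) ≤ n := Nat.ceil_le.1 hn
  set s := √(log n)
  have hs : 10 ^ 5 ≤ s := le_sqrt_log_of_exp_sq_le (by norm_num) hn
  have hn_eq : exp (s ^ 2) = n := exp_sqrt_log_sq ((one_le_exp (by positivity)).trans hn)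
  set k := ⌈3 * s⌉₊ + 20
  set m := ⌈s / 20⌉₊
  have hk : 3 * s + 20 ≤ k ∧ k ≤ 3 * s + 21 := by
    constructor <;> push_cast [k] <;>
      linarith [Nat.le_ceil (3 * s), Nat.ceil_lt_add_one (by positivity : 0 ≤ 3 * s)]
  have hm : s / 20 ≤ m ∧ m ≤ s / 20 + 1 :=
    ⟨Nat.le_ceil _, (Nat.ceil_lt_add_one (by positivity)).le⟩
  obtain ⟨B₀, hB₀, hundom, hhit⟩ :=
    H.exists_finset_card_le_undominated_lt_exp_and_diff_nonempty hn_eq (by linarith) hk.1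
      hcard hdeg (by simpa using ht.trans (div_le_self (by positivity) (by linarith))) A hA
  obtain ⟨B, hB, hBcard, hc⟩ := H.exists_superset_card_connectedComponent_induce_le (r := 6)
    (by exact_mod_cast (by linarith [(Nat.cast_le (α := ℝ)).2 hcard] :
      (Fintype.card V : ℝ) ≤ 6 * H.minDegree)) B₀ (m := m) (by
      rw [show ((6 : ℕ) - 1 : ℝ) / (6 : ℕ) = 5 / 6 by norm_num]
      refine (mul_le_mul_of_nonneg_right ?_ (by positivity)).trans_lt
        (natCast_mul_five_sixths_pow_lt_one hs hk.2 hm.1)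
      exact_mod_cast (H.card_connectedComponent_induce_le B₀).trans hB₀)
  refine ⟨B, ?_, ?_, fun j => (hhit j).mono (Set.sdiff_subset_sdiff_left (mod_cast hB)), hc⟩
  · have : (#B : ℝ) ≤ k + m := by exact_mod_cast hBcard.trans (by gcongr)
    linarith
  · refine le_trans ?_ hundom.le
    exact_mod_cast Set.ncard_le_ncard fun v (hv : ∀ b ∈ B, ¬ H.Adj v b) b hb => hv b (hB hb)
end

section
/- Let n be sufficiently large and let H = (V, E) be a graph on at most n vertices with minimum degree δ(H) ≥ n/6. Then there exists a set B ⊆ V with |B| ≤ 3.1·√(ln n) that dominates all but at most n·e^{-√(ln n)/3} vertices of V. -/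
/-!
Greedy domination. Averaging the degrees of the undominated vertices shows that some vertex
is adjacent to at least a `δ(H)/|V| ≥ 1/6` fraction of them, so adding the best such vertex
at each step leaves at most `(5/6)^k·|V|` vertices undominated after `k` steps. Taking
`k = ⌈2√(ln n)⌉` and using `5/6 ≤ e^{-1/6}` gives both bounds.
-/

open Finset

namespace SimpleGraph

variable {V : Type*} [Fintype V] (G : SimpleGraph V) [DecidableRel G.Adj]

def undominated (B : Finset V) : Finset V := {v | ∀ b ∈ B, ¬ G.Adj v b}

lemma coe_undominated (B : Finset V) :
    (G.undominated B : Set V) = {v | ∀ b ∈ B, ¬ G.Adj v b} := by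
  simp [undominated]

lemma undominated_insert [DecidableEq V] (b : V) (B : Finset V) :
    G.undominated (insert b B) = {u ∈ G.undominated B | ¬ G.Adj u b} := by
  ext u
  simp only [undominated, mem_filter, mem_univ, true_and, forall_mem_insert]
  tauto

lemma one_sub_minDegree_div_card_nonneg [Nonempty V] :
    0 ≤ 1 - (G.minDegree : ℝ) / Fintype.card V := by
  rw [sub_nonneg, div_le_one (by exact_mod_cast Fintype.card_pos)]
  exact_mod_cast G.minDegree_lt_card.le

lemma exists_card_mul_minDegree_le_card_filter_adj_mul [Nonempty V] (U : Finset V) :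
    ∃ b, #U * G.minDegree ≤ #{u ∈ U | G.Adj u b} * Fintype.card V := by
  have hdouble : ∑ u ∈ U, G.degree u = ∑ v, #{u ∈ U | G.Adj u v} := by
    calc ∑ u ∈ U, G.degree u = ∑ u ∈ U, #(univ.bipartiteAbove G.Adj u) := by
          simp only [bipartiteAbove, ← card_neighborFinset_eq_degree, neighborFinset_eq_filter]
      _ = ∑ v, #(U.bipartiteBelow G.Adj v) :=
          sum_card_bipartiteAbove_eq_sum_card_bipartiteBelow _
      _ = ∑ v, #{u ∈ U | G.Adj u v} := rfl
  obtain ⟨b, -, hb⟩ := exists_le_of_sum_le (s := univ) univ_nonempty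
    (f := fun _ => #U * G.minDegree) (g := fun v => #{u ∈ U | G.Adj u v} * Fintype.card V) <| by
    calc ∑ _v : V, #U * G.minDegree
        = Fintype.card V * ∑ _u ∈ U, G.minDegree := by simp [mul_left_comm]
      _ ≤ Fintype.card V * ∑ u ∈ U, G.degree u :=
          Nat.mul_le_mul_left _ (sum_le_sum fun u _ => G.minDegree_le_degree u)
      _ = ∑ v, #{u ∈ U | G.Adj u v} * Fintype.card V := by rw [hdouble, mul_comm, sum_mul]
  exact ⟨b, hb⟩

lemma exists_card_undominated_insert_le [DecidableEq V] [Nonempty V] (B : Finset V) :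
    ∃ b, (#(G.undominated (insert b B)) : ℝ)
      ≤ (1 - G.minDegree / Fintype.card V) * #(G.undominated B) := by
  set U := G.undominated B
  obtain ⟨b, hb⟩ := G.exists_card_mul_minDegree_le_card_filter_adj_mul U
  refine ⟨b, ?_⟩
  have hV : (0 : ℝ) < Fintype.card V := by exact_mod_cast Fintype.card_pos
  have hadj : (#U : ℝ) * G.minDegree / Fintype.card V ≤ #{u ∈ U | G.Adj u b} := by
    rw [div_le_iff₀ hV]
    exact_mod_cast hb
  rw [G.undominated_insert]
  have hsplit : (#{u ∈ U | G.Adj u b} : ℝ) + #{u ∈ U | ¬ G.Adj u b} = #U := by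
    exact_mod_cast card_filter_add_card_filter_not (fun u => G.Adj u b)
  calc (#{u ∈ U | ¬ G.Adj u b} : ℝ) ≤ #U - #U * G.minDegree / Fintype.card V := by linarith
    _ = (1 - G.minDegree / Fintype.card V) * #U := by ring

lemma exists_card_le_card_undominated_le [Nonempty V] (k : ℕ) :
    ∃ B : Finset V, #B ≤ k ∧
      (#(G.undominated B) : ℝ) ≤ (1 - G.minDegree / Fintype.card V) ^ k * Fintype.card V := by
  classical
  induction k with
  | zero => exact ⟨∅, le_rfl, by simpa using card_le_univ (G.undominated ∅)⟩
  | succ k ih =>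
    obtain ⟨B, hBk, hB⟩ := ih
    obtain ⟨b, hb⟩ := G.exists_card_undominated_insert_le B
    refine ⟨insert b B, (card_insert_le b B).trans (by omega), ?_⟩
    calc (#(G.undominated (insert b B)) : ℝ)
        ≤ (1 - G.minDegree / Fintype.card V) * #(G.undominated B) := hb
      _ ≤ (1 - G.minDegree / Fintype.card V) *
            ((1 - G.minDegree / Fintype.card V) ^ k * Fintype.card V) :=
          mul_le_mul_of_nonneg_left hB G.one_sub_minDegree_div_card_nonneg
      _ = (1 - G.minDegree / Fintype.card V) ^ (k + 1) * Fintype.card V := by ring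

end SimpleGraph

lemma five_sixths_pow_ceil_le_exp (s : ℝ) :
    (5 / 6 : ℝ) ^ ⌈2 * s⌉₊ ≤ Real.exp (-s / 3) := by
  have hbase : (5 / 6 : ℝ) ≤ Real.exp (-1 / 6) := by
    linarith [Real.add_one_le_exp (-1 / 6 : ℝ)]
  calc (5 / 6 : ℝ) ^ ⌈2 * s⌉₊ ≤ Real.exp (-1 / 6) ^ ⌈2 * s⌉₊ :=
        pow_le_pow_left₀ (by norm_num) hbase _
    _ = Real.exp (-⌈2 * s⌉₊ / 6) := by rw [← Real.exp_nat_mul]; ring_nf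
    _ ≤ Real.exp (-s / 3) := by
        rw [Real.exp_le_exp]
        linarith [Nat.le_ceil (2 * s)]

/-- In a graph `H` on at most `n` vertices (`n` sufficiently large) with minimum degree
at least `n/6`, there is a set `B` of at most `3.1·√(ln n)` vertices which dominates all
but at most `n·e^{-√(ln n)/3}` vertices. -/
theorem small_dominating_set :
    ∃ n₀ : ℕ, ∀ n : ℕ, n₀ ≤ n →
      ∀ (V : Type) [Fintype V] [Nonempty V] (H : SimpleGraph V)
        [DecidableRel H.Adj],
        Fintype.card V ≤ n →
        (n : ℝ) / 6 ≤ (H.minDegree : ℝ) →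
        ∃ B : Finset V,
          ((B.card : ℝ) ≤ 3.1 * Real.sqrt (Real.log n)) ∧
          (({v : V | ∀ b ∈ B, ¬ H.Adj v b}.ncard : ℝ) ≤
            (n : ℝ) * Real.exp (-(Real.sqrt (Real.log n)) / 3)) := by
  refine ⟨3, fun n hn V _ _ H _ hcard hδ => ?_⟩
  have hn3 : (3 : ℝ) ≤ n := by exact_mod_cast hn
  set s := Real.sqrt (Real.log n)
  have hs1 : 1 ≤ s := by
    rw [Real.one_le_sqrt, Real.le_log_iff_exp_le (by linarith)]
    linarith [Real.exp_one_lt_d9]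
  have hV : (Fintype.card V : ℝ) ≤ n := by exact_mod_cast hcard
  have hV0 : (0 : ℝ) < Fintype.card V := by exact_mod_cast Fintype.card_pos
  have hratio : 1 - (H.minDegree : ℝ) / Fintype.card V ≤ 5 / 6 := by
    rw [sub_le_comm, le_div_iff₀ hV0]
    linarith
  obtain ⟨B, hBk, hB⟩ := H.exists_card_le_card_undominated_le ⌈2 * s⌉₊
  refine ⟨B, ?_, ?_⟩
  · calc (#B : ℝ) ≤ ⌈2 * s⌉₊ := by exact_mod_cast hBk
      _ ≤ 2 * s + 1 := (Nat.ceil_lt_add_one (by positivity)).le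
      _ ≤ 3.1 * s := by linarith
  · rw [← H.coe_undominated, Set.ncard_coe_finset]
    calc (#(H.undominated B) : ℝ)
        ≤ (1 - H.minDegree / Fintype.card V) ^ ⌈2 * s⌉₊ * Fintype.card V := hB
      _ ≤ (5 / 6) ^ ⌈2 * s⌉₊ * n := by
          gcongr
          exact H.one_sub_minDegree_div_card_nonneg
      _ ≤ Real.exp (-s / 3) * n := by gcongr; exact five_sixths_pow_ceil_le_exp s
      _ = n * Real.exp (-s / 3) := mul_comm _ _
end

section
/- Let d be a positive integer and let G' = (V', E') be a graph with |E'| ≥ d·|V'| such that no minor G'' of G' with strictly smaller value of |V(G'')| + |E(G'')| satisfies |E(G'')| ≥ d·|V(G'')|. Then every edge of G' is contained in at least d triangles of G'; in particular, for every edge uv of G', the vertex u is adjacent to at least d neighbors of v. -/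
/-!
Contract an edge `uv` of `G'`. The contracted graph is a minor with one vertex fewer and at
most as many edges; it loses exactly the edge `uv` and, for every common neighbour `w` of
`u` and `v`, one of the two edges `uw`, `vw`, which merge. By minimality it has fewer than
`d (|V'| - 1)` edges, so `|E'| - 1 - t < d |V'| - d ≤ |E'| - d` for the number `t` of common
neighbours, i.e. `t ≥ d`.
-/

/-- `H` is a minor of `G`: there is a family of pairwise disjoint nonempty branch sets
in `G`, indexed by the vertices of `H`, each inducing a connected subgraph of `G`, such
that every edge of `H` is witnessed by an edge of `G` between the corresponding branch
sets. -/
def SimpleGraph.IsMinor {W V : Type*} (H : SimpleGraph W) (G : SimpleGraph V) : Prop :=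
  ∃ B : W → Set V,
    (∀ i, (B i).Nonempty) ∧
    (∀ i j, i ≠ j → Disjoint (B i) (B j)) ∧
    (∀ i, (G.induce (B i)).Connected) ∧
    (∀ i j, H.Adj i j → ∃ u ∈ B i, ∃ v ∈ B j, G.Adj u v)

namespace SimpleGraph

section Contract

variable {V W : Type*}

def contract (G : SimpleGraph V) (r : V → W) : SimpleGraph W :=
  fromEdgeSet (Sym2.map r '' G.edgeSet)

variable {G : SimpleGraph V} {r : V → W}

lemma contract_adj {a b : W} :
    (G.contract r).Adj a b ↔ a ≠ b ∧ ∃ x y, G.Adj x y ∧ r x = a ∧ r y = b := by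
  simp only [contract, fromEdgeSet_adj, Set.mem_image, Sym2.exists, Sym2.map_mk,
    mem_edgeSet, Sym2.eq_iff]
  constructor
  · rintro ⟨⟨x, y, hxy, ⟨rfl, rfl⟩ | ⟨rfl, rfl⟩⟩, hne⟩
    exacts [⟨hne, x, y, hxy, rfl, rfl⟩, ⟨hne, y, x, hxy.symm, rfl, rfl⟩]
  · rintro ⟨hne, x, y, hxy, rfl, rfl⟩
    exact ⟨⟨x, y, hxy, .inl ⟨rfl, rfl⟩⟩, hne⟩

theorem isMinor_contract (hconn : ∀ w, (G.induce (r ⁻¹' {w})).Connected) :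
    (G.contract r).IsMinor G := by
  refine ⟨fun w => r ⁻¹' {w}, fun w => ?_, fun a b hab => ?_, hconn, fun a b hab => ?_⟩
  · obtain ⟨x⟩ := (hconn w).nonempty
    exact ⟨x, x.2⟩
  · exact (Set.disjoint_singleton.mpr hab).preimage r
  · obtain ⟨-, x, y, hxy, rfl, rfl⟩ := contract_adj.mp hab
    exact ⟨x, rfl, y, rfl, hxy⟩

theorem ncard_edgeSet_contract_le [Finite V] :
    (G.contract r).edgeSet.ncard ≤ G.edgeSet.ncard :=
  calc (G.contract r).edgeSet.ncard ≤ (Sym2.map r '' G.edgeSet).ncard := by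
        rw [contract, edgeSet_fromEdgeSet]
        exact Set.ncard_le_ncard Set.sdiff_subset (Set.toFinite _)
    _ ≤ G.edgeSet.ncard := Set.ncard_image_le (Set.toFinite _)

end Contract

section MergeVertices

variable {V : Type*} [DecidableEq V] {u v : V}

def mergeMap (huv : u ≠ v) (x : V) : {x // x ≠ v} :=
  if hx : x = v then ⟨u, huv⟩ else ⟨x, hx⟩

lemma mergeMap_eq_iff (huv : u ≠ v) {x y : V} :
    mergeMap huv x = mergeMap huv y ↔ x = y ∨ x = u ∧ y = v ∨ x = v ∧ y = u := by
  unfold mergeMap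
  split_ifs <;> grind [Subtype.ext_iff]

lemma mergeMap_preimage (huv : u ≠ v) (a : {x // x ≠ v}) :
    mergeMap huv ⁻¹' {a} = if a.1 = u then {u, v} else {a.1} := by
  ext x
  unfold mergeMap
  split_ifs <;> grind [Subtype.ext_iff]

variable {G : SimpleGraph V}

theorem connected_induce_mergeMap_preimage (huv : G.Adj u v) (a : {x // x ≠ v}) :
    (G.induce (mergeMap huv.ne ⁻¹' {a})).Connected := by
  by_cases ha : a.1 = u
  · rw [mergeMap_preimage, if_pos ha]
    exact induce_pair_connected_of_adj huv
  · rw [mergeMap_preimage, if_neg ha, induce_singleton_eq_top]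
    exact connected_top

theorem isMinor_contract_mergeMap (huv : G.Adj u v) : (G.contract (mergeMap huv.ne)).IsMinor G :=
  isMinor_contract (connected_induce_mergeMap_preimage huv)

theorem injOn_map_mergeMap (huv : u ≠ v) :
    Set.InjOn (Sym2.map (mergeMap huv))
      (G.edgeSet \ (fun w => s(v, w)) '' G.commonNeighbors u v) := by
  intro e₁ ⟨he₁, he₁X⟩ e₂ ⟨he₂, he₂X⟩ h
  induction e₁ using Sym2.ind with | h a b => ?_
  induction e₂ using Sym2.ind with | h c d => ?_
  simp only [Sym2.map_mk, Sym2.eq_iff, mergeMap_eq_iff, mem_edgeSet, Set.mem_image,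
    mem_commonNeighbors] at *
  grind [he₁.symm, he₂.symm, he₁.ne, he₂.ne]

theorem ncard_edgeSet_le_contract_mergeMap [Finite V] (huv : G.Adj u v) :
    G.edgeSet.ncard ≤
      (G.contract (mergeMap huv.ne)).edgeSet.ncard + (G.commonNeighbors u v).ncard + 1 := by
  set X := insert s(u, v) ((fun w => s(v, w)) '' G.commonNeighbors u v)
  have hinj : Set.InjOn (Sym2.map (mergeMap huv.ne)) (G.edgeSet \ X) :=
    (injOn_map_mergeMap huv.ne).mono (Set.sdiff_subset_sdiff_right (Set.subset_insert _ _))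
  have hmaps : Sym2.map (mergeMap huv.ne) '' (G.edgeSet \ X) ⊆
      (G.contract (mergeMap huv.ne)).edgeSet := by
    rintro _ ⟨e, ⟨he, heX⟩, rfl⟩
    induction e using Sym2.ind with | h a b => ?_
    rw [Sym2.map_mk, mem_edgeSet, contract_adj]
    refine ⟨?_, a, b, he, rfl, rfl⟩
    simp only [X, Set.mem_insert_iff, Sym2.eq_iff] at heX
    rw [Ne, mergeMap_eq_iff]
    grind [he.ne]
  calc G.edgeSet.ncard ≤ (G.edgeSet \ X).ncard + X.ncard :=
        Set.ncard_le_ncard_sdiff_add_ncard _ _ (Set.toFinite _)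
    _ ≤ (G.contract (mergeMap huv.ne)).edgeSet.ncard + X.ncard := by
        rw [← hinj.ncard_image]
        gcongr
        exact Set.toFinite _
    _ ≤ _ := by
        rw [add_assoc]
        gcongr
        exact (Set.ncard_insert_le _ _).trans
          (by gcongr; exact Set.ncard_image_le (Set.toFinite _))

end MergeVertices

end SimpleGraph

open SimpleGraph in
theorem edges_in_many_triangles_of_minimal_minor_general
    (d : ℕ) (V' : Type) [Fintype V'] (G' : SimpleGraph V')
    (hE : d * Fintype.card V' ≤ G'.edgeSet.ncard)
    (hmin : ∀ (W : Type) [Fintype W] (H : SimpleGraph W), H.IsMinor G' →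
      Fintype.card W + H.edgeSet.ncard < Fintype.card V' + G'.edgeSet.ncard →
      H.edgeSet.ncard < d * Fintype.card W) :
    ∀ u v : V', G'.Adj u v →
      d ≤ (G'.neighborSet u ∩ G'.neighborSet v).ncard := by
  classical
  intro u v huv
  have hcard : Fintype.card {x // x ≠ v} + 1 = Fintype.card V' := by
    rw [Fintype.card_subtype_compl, Fintype.card_subtype_eq]
    have : 0 < Fintype.card V' := Fintype.card_pos_iff.mpr ⟨u⟩
    omega
  have hfewer := ncard_edgeSet_contract_le (G := G') (r := mergeMap huv.ne)
  have hmore := ncard_edgeSet_le_contract_mergeMap huv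
  have hsparse := hmin _ _ (isMinor_contract_mergeMap huv) (by omega)
  rw [← hcard, mul_add_one] at hE
  change d ≤ (G'.commonNeighbors u v).ncard
  omega

/-- If `G'` satisfies `|E'| ≥ d·|V'|` and no minor of `G'` with strictly smaller value of
`|V| + |E|` has at least `d` times as many edges as vertices, then every edge of `G'`
lies in at least `d` triangles: the endpoints of every edge have at least `d` common
neighbors. -/
theorem edges_in_many_triangles_of_minimal_minor
    (d : ℕ) (hd : 0 < d) (V' : Type) [Fintype V'] (G' : SimpleGraph V')
    (hE : d * Fintype.card V' ≤ G'.edgeSet.ncard)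
    (hmin : ∀ (W : Type) [Fintype W] (H : SimpleGraph W), H.IsMinor G' →
      Fintype.card W + H.edgeSet.ncard < Fintype.card V' + G'.edgeSet.ncard →
      H.edgeSet.ncard < d * Fintype.card W) :
    ∀ u v : V', G'.Adj u v →
      d ≤ (G'.neighborSet u ∩ G'.neighborSet v).ncard :=
  edges_in_many_triangles_of_minimal_minor_general d V' G' hE hmin
end

section
/- Let d be a positive integer and let H be a graph with at most 2d vertices and minimum degree δ(H) ≥ d. Then H contains an induced subgraph H₁ that is ⌈d/3⌉-connected and has minimum degree δ(H₁) ≥ 2d/3. -/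
/-!
Let `k = ⌈d/3⌉`, so `3k ≤ d + 2`. If `H` is `k`-connected, take `A = V`. Otherwise a set `S` of
fewer than `k` vertices separates `H`, and the smaller side `B` of the separation has at most
`(2d - |S|)/2` vertices, while every vertex of `B` keeps at least `d - |S| ≥ 2d/3` neighbours in
`B`. Two non-adjacent vertices of a graph on `m` vertices with minimum degree `δ` have at least
`2δ + 2 - m ≥ k` common neighbours, so deleting fewer than `k` vertices cannot disconnect `H[B]`.
-/

/-- A graph is `k`-connected if it has more than `k` vertices and remains connected
after the deletion of any set of fewer than `k` vertices. -/
def SimpleGraph.KConnected {V : Type*} (G : SimpleGraph V) (k : ℕ) : Prop :=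
  k < Nat.card V ∧ ∀ S : Set V, S.ncard < k → (G.induce (Sᶜ : Set V)).Connected

open Set

namespace SimpleGraph

variable {V W : Type*} {G : SimpleGraph V} {G' : SimpleGraph W}

lemma ncard_neighborSet_induce (A : Set V) (v : A) :
    ((G.induce A).neighborSet v).ncard = (G.neighborSet v ∩ A).ncard := by
  rw [neighborSet_induce, ← ncard_image_of_injective _ Subtype.val_injective,
    image_preimage_eq_inter_range, Subtype.range_coe]

lemma ncard_neighborSet_lt_card [Finite V] (v : V) : (G.neighborSet v).ncard < Nat.card V :=
  ncard_lt_card fun h => G.irrefl (h ▸ mem_univ v : v ∈ G.neighborSet v)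

lemma compl_nonempty_of_ncard_lt_card [Finite V] {S : Set V} (hS : S.ncard < Nat.card V) :
    Sᶜ.Nonempty :=
  nonempty_compl.2 (by rintro rfl; simp at hS)

def Iso.induceCompl (e : G ≃g G') (S : Set W) :
    G.induce (e ⁻¹' S)ᶜ ≃g G'.induce Sᶜ where
  toEquiv := e.toEquiv.subtypeEquiv fun _ => Iff.rfl
  map_rel_iff' := e.map_rel_iff

lemma Iso.kConnected {k : ℕ} (e : G ≃g G') (hG : G.KConnected k) : G'.KConnected k := by
  refine ⟨Nat.card_congr e.toEquiv ▸ hG.1, fun S hS => ?_⟩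
  have hpre : (e ⁻¹' S).ncard = S.ncard :=
    ncard_preimage_of_injective_subset_range e.injective (by simp)
  exact (e.induceCompl S).connected_iff.1 (hG.2 _ (hpre ▸ hS))

lemma KConnected.induce_univ {k : ℕ} (hG : G.KConnected k) : (G.induce univ).KConnected k :=
  G.induceUnivIso.symm.kConnected hG

lemma two_mul_add_two_le_ncard_commonNeighbors_add_card [Finite V] {δ : ℕ}
    (hδ : ∀ v, δ ≤ (G.neighborSet v).ncard) {u v : V} (huv : u ≠ v) (hadj : ¬ G.Adj u v) :
    2 * δ + 2 ≤ (G.commonNeighbors u v).ncard + Nat.card V := by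
  have hdisj : Disjoint (G.neighborSet u ∪ G.neighborSet v) {u, v} := by
    simpa [hadj] using fun h => hadj h.symm
  have hunion := ncard_union_eq hdisj
  have hle := ncard_le_card (G.neighborSet u ∪ G.neighborSet v ∪ {u, v})
  rw [commonNeighbors_eq]
  have := ncard_union_add_ncard_inter (G.neighborSet u) (G.neighborSet v)
  have := ncard_pair huv
  have := hδ u
  have := hδ v
  omega

lemma kConnected_of_card_add_le [Finite V] {δ k : ℕ} (hδ : ∀ v, δ ≤ (G.neighborSet v).ncard)
    (hk : k < Nat.card V) (hcard : Nat.card V + k ≤ 2 * δ + 2) : G.KConnected k := by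
  refine ⟨hk, fun S hS => (connected_iff _).2 ⟨fun u v => ?_,
    (compl_nonempty_of_ncard_lt_card (hS.trans hk)).to_subtype⟩⟩
  obtain rfl | huv := eq_or_ne u v
  · rfl
  by_cases hadj : G.Adj u v
  · exact Adj.reachable hadj
  have hcommon := two_mul_add_two_le_ncard_commonNeighbors_add_card hδ
    (Subtype.val_injective.ne huv) hadj
  obtain ⟨w, ⟨hwu, hwv⟩, hwS⟩ := exists_mem_notMem_of_ncard_lt_ncard (s := S)
    (t := G.commonNeighbors u v) (by omega)
  exact (Adj.reachable (G := G.induce Sᶜ) (v := ⟨w, hwS⟩) hwu).trans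
    (Adj.reachable (G.adj_symm hwv))

lemma ncard_neighborSet_le_ncard_neighborSet_induce_add [Finite V] {S B : Set V} {x : V}
    (hx : x ∈ B) (hN : G.neighborSet x ⊆ B ∪ S) :
    (G.neighborSet x).ncard ≤ ((G.induce B).neighborSet ⟨x, hx⟩).ncard + S.ncard := by
  rw [ncard_neighborSet_induce]
  calc (G.neighborSet x).ncard ≤ (G.neighborSet x ∩ B ∪ S).ncard :=
        ncard_le_ncard fun w hw => (hN hw).imp (⟨hw, ·⟩) id
    _ ≤ _ := ncard_union_le _ _

lemma neighborSet_subset_compl_diff_union {S B : Set V}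
    (hB : ∀ x ∈ B, G.neighborSet x ⊆ B ∪ S) :
    ∀ y ∈ Sᶜ \ B, G.neighborSet y ⊆ (Sᶜ \ B) ∪ S := by
  rintro y ⟨hyS, hyB⟩ w hw
  by_cases hwS : w ∈ S
  · exact .inr hwS
  exact .inl ⟨hwS, fun hwB => (hB w hwB (G.adj_symm hw)).elim hyB hyS⟩

lemma exists_small_side_of_not_preconnected [Finite V] {S : Set V}
    (h : ¬ (G.induce Sᶜ).Preconnected) :
    ∃ B : Set V, B.Nonempty ∧ (∀ x ∈ B, G.neighborSet x ⊆ B ∪ S) ∧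
      2 * B.ncard + S.ncard ≤ Nat.card V := by
  obtain ⟨u, v, huv⟩ : ∃ u v, ¬ (G.induce Sᶜ).Reachable u v := by simpa [Preconnected] using h
  set X : Set V := Subtype.val '' {w | (G.induce Sᶜ).Reachable u w}
  have hX : ∀ x ∈ X, G.neighborSet x ⊆ X ∪ S := by
    rintro _ ⟨x, hx, rfl⟩ w hw
    by_cases hwS : w ∈ S
    · exact .inr hwS
    exact .inl ⟨⟨w, hwS⟩, hx.trans (Adj.reachable (G := G.induce Sᶜ) hw), rfl⟩
  have hvX : (v : V) ∉ X := by
    rintro ⟨v', hv', hvv'⟩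
    exact huv (Subtype.ext hvv' ▸ hv')
  have hcard : X.ncard + (Sᶜ \ X).ncard + S.ncard = Nat.card V := by
    rw [add_comm X.ncard, ncard_sdiff_add_ncard_of_subset (Subtype.coe_image_subset _ _),
      ncard_compl_add_ncard]
  rcases le_total X.ncard (Sᶜ \ X).ncard with hle | hle
  · exact ⟨X, ⟨u, u, .rfl, rfl⟩, hX, by omega⟩
  · exact ⟨Sᶜ \ X, ⟨v, v.2, hvX⟩, neighborSet_subset_compl_diff_union hX, by omega⟩

lemma kConnected_induce_of_small_side [Finite V] {d k : ℕ} {S B : Set V} (hB : B.Nonempty)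
    (hBS : ∀ x ∈ B, G.neighborSet x ⊆ B ∪ S) (hdeg : ∀ v, d ≤ (G.neighborSet v).ncard)
    (hS : S.ncard < k) (hk : 3 * k ≤ d + 2) (hsize : 2 * B.ncard + S.ncard ≤ 2 * d) :
    (G.induce B).KConnected k ∧ ∀ v : B, 2 * d ≤ 3 * ((G.induce B).neighborSet v).ncard := by
  have hdegB (v : B) : d - S.ncard ≤ ((G.induce B).neighborSet v).ncard := by
    have := ncard_neighborSet_le_ncard_neighborSet_induce_add v.2 (hBS v v.2)
    simp only [Subtype.coe_eta] at this
    have := hdeg v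
    omega
  have : Nonempty B := hB.to_subtype
  have hBcard : d - S.ncard < B.ncard :=
    Nat.card_coe_set_eq B ▸ (hdegB _).trans_lt (ncard_neighborSet_lt_card (Classical.arbitrary B))
  refine ⟨kConnected_of_card_add_le hdegB ?_ ?_, fun v => by have := hdegB v; omega⟩ <;>
    rw [Nat.card_coe_set_eq] <;> omega

theorem exists_induce_kConnected [Finite V] [Nonempty V] {d k : ℕ} (hk : 3 * k ≤ d + 2)
    (hcard : Nat.card V ≤ 2 * d) (hdeg : ∀ v, d ≤ (G.neighborSet v).ncard) :
    ∃ A : Set V, (G.induce A).KConnected k ∧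
      ∀ v : A, 2 * d ≤ 3 * ((G.induce A).neighborSet v).ncard := by
  by_cases hG : G.KConnected k
  · refine ⟨univ, hG.induce_univ, fun v => ?_⟩
    rw [ncard_neighborSet_induce, inter_univ]
    have := hdeg v
    omega
  have hkV : k < Nat.card V := by
    have := ncard_neighborSet_lt_card (G := G) (Classical.arbitrary V)
    have := hdeg (Classical.arbitrary V)
    omega
  obtain ⟨S, hS, hSdisc⟩ : ∃ S : Set V, S.ncard < k ∧ ¬ (G.induce Sᶜ).Connected := by
    simpa [KConnected, hkV] using hG
  have hSpre : ¬ (G.induce Sᶜ).Preconnected := fun hpre => hSdisc <|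
    (connected_iff _).2 ⟨hpre, (compl_nonempty_of_ncard_lt_card (hS.trans hkV)).to_subtype⟩
  obtain ⟨B, hB, hBS, hsize⟩ := G.exists_small_side_of_not_preconnected hSpre
  exact ⟨B, kConnected_induce_of_small_side hB hBS hdeg hS hk (hsize.trans hcard)⟩

end SimpleGraph

lemma three_mul_ceil_div_three_le (d : ℕ) : 3 * ⌈(d : ℝ) / 3⌉₊ ≤ d + 2 := by
  have h := Nat.ceil_lt_add_one (by positivity : (0 : ℝ) ≤ d / 3)
  have : ((3 * ⌈(d : ℝ) / 3⌉₊ : ℕ) : ℝ) < (d + 3 : ℕ) := by push_cast; linarith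
  exact Nat.lt_succ_iff.1 (by exact_mod_cast this)

theorem exists_highly_connected_subgraph_general
    (d : ℕ) (V : Type) [Fintype V] [Nonempty V] (H : SimpleGraph V)
    (hcard : Fintype.card V ≤ 2 * d)
    (hdeg : ∀ v : V, d ≤ (H.neighborSet v).ncard) :
    ∃ A : Set V, (H.induce A).KConnected ⌈(d : ℝ) / 3⌉₊ ∧
      ∀ v : A, (2 * d : ℝ) / 3 ≤ (((H.induce A).neighborSet v).ncard : ℝ) := by
  obtain ⟨A, hA, hdegA⟩ := H.exists_induce_kConnected (three_mul_ceil_div_three_le d)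
    (Nat.card_eq_fintype_card (α := V) ▸ hcard) hdeg
  refine ⟨A, hA, fun v => ?_⟩
  rw [div_le_iff₀ three_pos]
  exact_mod_cast (mul_comm 3 _ ▸ hdegA v :)

/-- Every graph `H` with at most `2d` vertices and minimum degree at least `d` contains
an induced subgraph that is `⌈d/3⌉`-connected and has minimum degree at least `2d/3`. -/
theorem exists_highly_connected_subgraph
    (d : ℕ) (hd : 0 < d) (V : Type) [Fintype V] [Nonempty V] (H : SimpleGraph V)
    (hcard : Fintype.card V ≤ 2 * d)
    (hdeg : ∀ v : V, d ≤ (H.neighborSet v).ncard) :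
    ∃ A : Set V, (H.induce A).KConnected ⌈(d : ℝ) / 3⌉₊ ∧
      ∀ v : A, (2 * d : ℝ) / 3 ≤ (((H.induce A).neighborSet v).ncard : ℝ) :=
  exists_highly_connected_subgraph_general d V H hcard hdeg
end

section
/- Let k be a positive integer and let G be a graph in which every two distinct vertices have at least k common neighbors. Then G is k-connected. -/
namespace SimpleGraph

variable {V : Type*} (G : SimpleGraph V)

theorem ncard_commonNeighbors_lt_card [Finite V] (u v : V) :
    (G.commonNeighbors u v).ncard < Nat.card V :=
  Set.ncard_lt_card fun h ↦ G.notMem_commonNeighbors_left u v (h ▸ Set.mem_univ u)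

theorem preconnected_of_commonNeighbors_nonempty
    (h : ∀ u v : V, u ≠ v → (G.commonNeighbors u v).Nonempty) : G.Preconnected := by
  intro u v
  rcases eq_or_ne u v with rfl | huv
  · rfl
  obtain ⟨w, huw, hvw⟩ := h u v huv
  exact huw.reachable.trans hvw.symm.reachable

theorem preconnected_induce_compl_of_ncard_lt_ncard_commonNeighbors {S : Set V}
    (hS : S.Finite) (h : ∀ u v : V, u ≠ v → S.ncard < (G.commonNeighbors u v).ncard) :
    (G.induce Sᶜ).Preconnected := by
  refine preconnected_of_commonNeighbors_nonempty _ fun u v huv ↦ ?_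
  obtain ⟨w, hw, hwS⟩ :=
    Set.exists_mem_notMem_of_ncard_lt_ncard (h u v (Subtype.coe_ne_coe.2 huv)) hS
  exact ⟨⟨w, hwS⟩, hw⟩

end SimpleGraph

theorem kConnected_of_common_neighbors_general
    (k : ℕ) (V : Type) [Fintype V] [Nontrivial V] (G : SimpleGraph V)
    (h : ∀ u v : V, u ≠ v → k ≤ (G.neighborSet u ∩ G.neighborSet v).ncard) :
    G.KConnected k := by
  have hcard : k < Nat.card V := by
    obtain ⟨u, v, huv⟩ := exists_pair_ne V
    exact (h u v huv).trans_lt (G.ncard_commonNeighbors_lt_card u v)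
  refine ⟨hcard, fun S hS ↦ ?_⟩
  have hSV : S ≠ Set.univ := by
    rintro rfl
    rw [Set.ncard_univ] at hS
    omega
  have : Nonempty (Sᶜ : Set V) := (Set.nonempty_compl.2 hSV).to_subtype
  exact ⟨G.preconnected_induce_compl_of_ncard_lt_ncard_commonNeighbors S.toFinite
    fun u v huv ↦ hS.trans_le (h u v huv)⟩

/-- If every two distinct vertices of a graph `G` have at least `k ≥ 1` common
neighbors, then `G` is `k`-connected. -/
theorem kConnected_of_common_neighbors
    (k : ℕ) (hk : 0 < k) (V : Type) [Fintype V] [Nontrivial V] (G : SimpleGraph V)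
    (h : ∀ u v : V, u ≠ v → k ≤ (G.neighborSet u ∩ G.neighborSet v).ncard) :
    G.KConnected k :=
  kConnected_of_common_neighbors_general k V G h
end

section
/- Let G be a connected graph on n vertices with minimum degree δ satisfying n < 6δ. Then the diameter of G is at most 14; that is, every two vertices of G are joined by a path with at most 14 edges. -/
/-!
On a shortest walk of length `d`, the vertices at positions `0, 3, 6, …` are pairwise at
distance at least `3`, so their closed neighbourhoods are pairwise disjoint, and each has at
least `δ + 1` vertices. Hence `(d / 3 + 1) (δ + 1) ≤ n`, and `d ≥ 15` would force
`6 (δ + 1) ≤ n < 6 δ`.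
-/

open Finset

namespace SimpleGraph

variable {V : Type*} {G : SimpleGraph V}

theorem Walk.dist_getVert_getVert_of_length_eq_dist {u v : V} (p : G.Walk u v)
    (hp : p.length = G.dist u v) {i j : ℕ} (hij : i ≤ j) (hj : j ≤ p.length) :
    G.dist (p.getVert i) (p.getVert j) = j - i := by
  have hsub : ((p.drop i).take (j - i)).IsSubwalk p :=
    (Walk.isSubwalk_take _ _).trans (Walk.isSubwalk_drop _ _)
  have := length_eq_dist_of_subwalk hp hsub
  rw [Walk.take_length, Walk.drop_length, Walk.drop_getVert, Nat.add_sub_cancel' hij] at this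
  omega

theorem dist_le_one_of_eq_or_adj {x y : V} (h : y = x ∨ G.Adj x y) : G.dist x y ≤ 1 := by
  rcases h with rfl | hadj
  · simp
  · exact (dist_eq_one_iff_adj.mpr hadj).le

variable [Fintype V] [DecidableRel G.Adj]

theorem disjoint_insert_neighborFinset_of_three_le_dist [DecidableEq V] {x y : V}
    (h : 3 ≤ G.dist x y) :
    Disjoint (insert x (G.neighborFinset x)) (insert y (G.neighborFinset y)) := by
  rw [Finset.disjoint_left]
  intro z hzx hzy
  simp only [mem_insert, mem_neighborFinset] at hzx hzy
  have hreach : G.Reachable z y := by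
    rcases hzy with rfl | hadj
    · rfl
    · exact hadj.symm.reachable
  have hxy := hreach.dist_triangle_right x
  have hxz := dist_le_one_of_eq_or_adj hzx
  have hzy' : G.dist z y ≤ 1 := dist_comm ▸ dist_le_one_of_eq_or_adj hzy
  omega

theorem card_insert_neighborFinset [DecidableEq V] (x : V) :
    #(insert x (G.neighborFinset x)) = G.degree x + 1 := by
  rw [card_insert_of_notMem (by simp), card_neighborFinset_eq_degree]

theorem card_mul_minDegree_succ_le_of_pairwise_three_le_dist {ι : Type*} [Fintype ι]
    (f : ι → V) (hf : Pairwise fun a b => 3 ≤ G.dist (f a) (f b)) :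
    Fintype.card ι * (G.minDegree + 1) ≤ Fintype.card V := by
  classical
  have hdisj : (↑(univ : Finset ι) : Set ι).PairwiseDisjoint
      fun a => insert (f a) (G.neighborFinset (f a)) :=
    fun a _ b _ hab => disjoint_insert_neighborFinset_of_three_le_dist (hf hab)
  calc Fintype.card ι * (G.minDegree + 1)
      ≤ ∑ a, #(insert (f a) (G.neighborFinset (f a))) := by
        rw [← smul_eq_mul, ← card_univ]
        refine card_nsmul_le_sum _ _ _ fun a _ => ?_
        rw [card_insert_neighborFinset]
        exact Nat.succ_le_succ (G.minDegree_le_degree _)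
    _ = #(univ.biUnion fun a => insert (f a) (G.neighborFinset (f a))) :=
        (card_biUnion hdisj).symm
    _ ≤ Fintype.card V := card_le_univ _

theorem Walk.length_div_three_succ_mul_minDegree_succ_le {u v : V} (p : G.Walk u v)
    (hp : p.length = G.dist u v) :
    (p.length / 3 + 1) * (G.minDegree + 1) ≤ Fintype.card V := by
  have hf : Pairwise fun a b : Fin (p.length / 3 + 1) =>
      3 ≤ G.dist (p.getVert (3 * a)) (p.getVert (3 * b)) := by
    intro a b hab
    have hlen (c : Fin (p.length / 3 + 1)) : 3 * (c : ℕ) ≤ p.length := by omega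
    rcases lt_or_gt_of_ne hab with h | h
    · rw [p.dist_getVert_getVert_of_length_eq_dist hp (by omega) (hlen b)]
      omega
    · rw [dist_comm, p.dist_getVert_getVert_of_length_eq_dist hp (by omega) (hlen a)]
      omega
  simpa using card_mul_minDegree_succ_le_of_pairwise_three_le_dist _ hf

end SimpleGraph

theorem diameter_le_fourteen_general
    (V : Type) [Fintype V] (G : SimpleGraph V) [DecidableRel G.Adj]
    (hdeg : Fintype.card V < 6 * G.minDegree) :
    ∀ u v : V, G.dist u v ≤ 14 := by
  intro u v
  by_contra! hfar
  obtain ⟨p, hp⟩ := G.exists_walk_of_dist_ne_zero (u := u) (v := v) (by omega)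
  have hpack := p.length_div_three_succ_mul_minDegree_succ_le hp
  have hsix : 6 ≤ p.length / 3 + 1 := by omega
  nlinarith

/-- A connected graph on `n` vertices with minimum degree `δ` satisfying `n < 6δ` has
diameter at most `14`: every two vertices are joined by a path with at most 14 edges. -/
theorem diameter_le_fourteen
    (V : Type) [Fintype V] [Nonempty V] (G : SimpleGraph V) [DecidableRel G.Adj]
    (hconn : G.Connected) (hdeg : Fintype.card V < 6 * G.minDegree) :
    ∀ u v : V, G.dist u v ≤ 14 :=
  diameter_le_fourteen_general V G hdeg
end

section
/- Let G be a connected graph of diameter at most D, and let S ⊆ V(G) be a nonempty set of vertices such that the subgraph of G induced by S has at most k connected components. Then there exists a set S' with S ⊆ S' ⊆ V(G), |S'| ≤ |S| + (k − 1)·(D − 1), such that the subgraph of G induced by S' is connected. -/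
/-!
Fix `s ∈ S`. Join a representative of every other component of `G[S]` to `s` by a shortest
walk in `G`. Each walk has length at most `D` and both endpoints in `S`, so it contributes at
most `D - 1` new vertices, and every vertex of `S` or of a walk is then joined to `s` inside the
enlarged set.
-/

open Finset

theorem Fintype.sum_le_card_sub_one_mul {ι : Type*} [Fintype ι] [DecidableEq ι] {f : ι → ℕ}
    {m : ℕ} (i₀ : ι) (h₀ : f i₀ = 0) (h : ∀ i, f i ≤ m) :
    ∑ i, f i ≤ (Fintype.card ι - 1) * m := by
  rw [← sum_erase univ h₀, ← card_univ, ← card_erase_of_mem (mem_univ i₀)]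
  exact sum_le_card_nsmul _ _ _ fun i _ => h i

theorem Set.ncard_union_iUnion_le {α ι : Type*} [Fintype ι] (S : Set α) (A : ι → Set α) :
    (S ∪ ⋃ i, A i).ncard ≤ S.ncard + ∑ i, (A i \ S).ncard := by
  rw [← Set.union_sdiff_self, Set.iUnion_sdiff]
  exact (Set.ncard_union_le _ _).trans (Nat.add_le_add_left (Set.ncard_iUnion_le_of_fintype _) _)

namespace SimpleGraph

variable {V : Type*} {G : SimpleGraph V}

theorem Walk.ncard_support_diff_le {S : Set V} {u v : V} (p : G.Walk u v) (hu : u ∈ S)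
    (hv : v ∈ S) : ({x | x ∈ p.support} \ S).ncard ≤ p.length - 1 := by
  classical
  cases p with
  | nil => simp [Set.sdiff_eq_empty, hu]
  | cons _ q =>
    calc ({x | x ∈ (cons _ q).support} \ S).ncard
        ≤ (q.support.toFinset.erase v : Set V).ncard := by
          refine Set.ncard_le_ncard ?_ (Finset.finite_toSet _)
          rintro x ⟨hx, hxS⟩
          simp only [Walk.support_cons, List.mem_cons] at hx
          rcases hx with rfl | hx
          · exact absurd hu hxS
          · exact mem_erase.mpr ⟨by rintro rfl; exact hxS hv, List.mem_toFinset.mpr hx⟩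
      _ ≤ q.length := by
          rw [Set.ncard_coe_finset, card_erase_of_mem (by simp)]
          have := q.support.toFinset_card_le
          rw [Walk.length_support] at this
          omega
      _ = (cons _ q).length - 1 := by simp

theorem Walk.reachable_induce_support {T : Set V} {u v : V} (p : G.Walk u v)
    (hp : {x | x ∈ p.support} ⊆ T) :
    (G.induce T).Reachable ⟨u, hp p.start_mem_support⟩ ⟨v, hp p.end_mem_support⟩ :=
  p.connected_induce_support ⟨u, p.start_mem_support⟩ ⟨v, p.end_mem_support⟩
    |>.map (G.induceHomOfLE hp).toHom

theorem connected_induce_union_iUnion_support {S : Set V} {s : V} (hs : s ∈ S)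
    (c : (G.induce S).ConnectedComponent → S)
    (hc : ∀ C, (G.induce S).connectedComponentMk (c C) = C)
    (p : ∀ C, G.Walk (c C) s) :
    (G.induce (S ∪ ⋃ C, {x | x ∈ (p C).support})).Connected := by
  classical
  set T := S ∪ ⋃ C, {x | x ∈ (p C).support}
  have hST : S ⊆ T := Set.subset_union_left
  have hpT : ∀ C, {x | x ∈ (p C).support} ⊆ T := fun C =>
    (Set.subset_iUnion (fun C => {x | x ∈ (p C).support}) C).trans Set.subset_union_right
  rw [connected_iff_exists_forall_reachable]
  refine ⟨⟨s, hST hs⟩, ?_⟩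
  rintro ⟨v, hv | hv⟩
  · set C := (G.induce S).connectedComponentMk ⟨v, hv⟩
    have hvc : (G.induce S).Reachable ⟨v, hv⟩ (c C) := ConnectedComponent.exact (hc C).symm
    exact ((p C).reachable_induce_support (hpT C)).symm.trans
      (hvc.map (G.induceHomOfLE hST).toHom).symm
  · obtain ⟨C, hvC⟩ := Set.mem_iUnion.mp hv
    exact (((p C).dropUntil v hvC).reachable_induce_support
      (Set.Subset.trans (fun _ hx => (p C).support_dropUntil_subset_support hvC hx) (hpT C))).symm

end SimpleGraph

open SimpleGraph in
/-- In a connected graph of diameter at most `D`, any nonempty vertex set `S` whose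
induced subgraph has at most `k` connected components can be enlarged, by adding at most
`(k − 1)·(D − 1)` vertices, to a set inducing a connected subgraph. -/
theorem connect_components_by_paths
    (V : Type) [Fintype V] (G : SimpleGraph V) (D k : ℕ)
    (hconn : G.Connected) (hdiam : ∀ u v : V, G.dist u v ≤ D)
    (S : Set V) (hS : S.Nonempty)
    (hk : Nat.card (G.induce S).ConnectedComponent ≤ k) :
    ∃ S' : Set V, S ⊆ S' ∧ S'.ncard ≤ S.ncard + (k - 1) * (D - 1) ∧
      (G.induce S').Connected := by
  classical
  obtain ⟨s, hs⟩ := hS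
  set H := G.induce S
  let C₀ := H.connectedComponentMk ⟨s, hs⟩
  -- representing `C₀` by `s` itself makes its walk trivial, so it adds no vertices
  let c : H.ConnectedComponent → S := fun C => if C = C₀ then ⟨s, hs⟩ else C.out
  have hc : ∀ C, H.connectedComponentMk (c C) = C := fun C => by
    by_cases hC : C = C₀
    · rw [show c C = ⟨s, hs⟩ from if_pos hC, hC]
    · rw [show c C = C.out from if_neg hC]
      exact Quot.out_eq C
  choose p hp using fun C => (hconn.preconnected (c C) s).exists_walk_length_eq_dist
  refine ⟨_, Set.subset_union_left, ?_, connected_induce_union_iUnion_support hs c hc p⟩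
  have hp₀ : (p C₀).length = 0 := by simp [hp, c]
  calc _ ≤ S.ncard + ∑ C, ({x | x ∈ (p C).support} \ S).ncard := Set.ncard_union_iUnion_le _ _
    _ ≤ S.ncard + (Fintype.card H.ConnectedComponent - 1) * (D - 1) := by
        refine Nat.add_le_add_left (Fintype.sum_le_card_sub_one_mul C₀ ?_ fun C => ?_) _
        · simpa [hp₀] using (p C₀).ncard_support_diff_le (c C₀).2 hs
        · grw [(p C).ncard_support_diff_le (c C).2 hs, hp, hdiam]
    _ ≤ S.ncard + (k - 1) * (D - 1) := by
        gcongr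
        simpa only [Nat.card_eq_fintype_card] using hk
end
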